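/- For every integer d ≥ 1, all natural numbers n_1, n_2 with n_1, n_2 ≤ d, and all integers τ_1, τ_2: Σ_{k=0}^{d²−1} χ[((k−τ_1) mod d) < n_1] · χ[((k−τ_2) mod d²) < d·n_2] = n_1·n_2. In particular, this pairwise Hamming cross-correlation is independent of the shifts τ_1, τ_2. -/

import Mathlib

/-!
Shifting the summation index by `τ₂` (the summand is `d²`-periodic) reduces the correlation
to `τ₂ = 0`, where the `d²`-sequence simply truncates the sum to `k < d n₂`. That range splits
into `n₂` blocks of length `d`, each a full period of the shifted `d`-sequence, which has `n₁`
ones per period.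
-/

open Finset Function

namespace Function.Periodic

variable {M : Type*} [AddCommMonoid M] {f : ℤ → M}

theorem sum_range_add_const [IsRightCancelAdd M] {m : ℕ} (hf : Periodic f m) (c : ℤ) :
    ∑ k ∈ range m, f (k + c) = ∑ k ∈ range m, f k := by
  have step : ∀ c : ℤ, ∑ k ∈ range m, f (k + (c + 1)) = ∑ k ∈ range m, f (k + c) := by
    intro c
    apply add_right_cancel (b := f c)
    have h := sum_range_succ' (fun k : ℕ => f (k + c)) m
    rw [sum_range_succ, add_comm (m : ℤ), hf] at h
    simpa [add_assoc, add_comm (1 : ℤ)] using h.symm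
  induction c using Int.induction_on with
  | zero => simp
  | succ c ih => rw [step, ih]
  | pred c ih => rw [← ih, ← step, sub_add_cancel]

theorem sum_range_mul {d : ℕ} (hf : Periodic f d) (n : ℕ) :
    ∑ k ∈ range (d * n), f k = n • ∑ k ∈ range d, f k := by
  induction n with
  | zero => simp
  | succ n ih =>
    rw [Nat.mul_succ, sum_range_add, ih, succ_nsmul]
    congr 1
    refine sum_congr rfl fun k _ => ?_
    rw [Nat.cast_add, add_comm, Nat.cast_mul, mul_comm]
    exact hf.nat_mul n k

end Function.Periodic

def blockIndicator (q w x : ℤ) : ℤ := if x % q < w then 1 else 0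

theorem blockIndicator_periodic (q w : ℤ) : Periodic (blockIndicator q w) q := by
  intro x
  simp only [blockIndicator, Int.add_emod_right]

theorem sum_range_mul_blockIndicator {q w : ℕ} (hw : w ≤ q) (f : ℤ → ℤ) :
    ∑ k ∈ range q, f k * blockIndicator q w k = ∑ k ∈ range w, f k := by
  obtain ⟨r, rfl⟩ := Nat.exists_eq_add_of_le hw
  rw [sum_range_add, ← add_zero (∑ k ∈ range w, f k)]
  congr 1
  · refine sum_congr rfl fun k hk => ?_
    have hk : k < w := mem_range.mp hk
    rw [blockIndicator, Int.emod_eq_of_lt (by positivity) (by omega), if_pos (by omega), mul_one]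
  · refine sum_eq_zero fun k hk => ?_
    have hk : k < r := mem_range.mp hk
    rw [blockIndicator, Int.emod_eq_of_lt (by positivity) (by omega), if_neg (by omega), mul_zero]

theorem sum_range_blockIndicator {q w : ℕ} (hw : w ≤ q) :
    ∑ k ∈ range q, blockIndicator q w k = w := by
  simpa using sum_range_mul_blockIndicator hw 1

theorem pairwise_correlation_d_dsq_shift_invariant_general
    (d : ℕ) (n₁ n₂ : ℕ)
    (h₁ : n₁ ≤ d) (h₂ : n₂ ≤ d)
    (τ₁ τ₂ : ℤ) :
    ∑ k ∈ Finset.range (d ^ 2),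
        (if ((k : ℤ) - τ₁) % (d : ℤ) < (n₁ : ℤ) then (1 : ℤ) else 0)
          * (if ((k : ℤ) - τ₂) % ((d : ℤ) ^ 2) < (d : ℤ) * (n₂ : ℤ) then 1 else 0)
      = (n₁ : ℤ) * n₂ := by
  set first : ℤ → ℤ := fun x => blockIndicator d n₁ (x + (τ₂ - τ₁))
  set second : ℤ → ℤ := blockIndicator (d ^ 2 : ℕ) (d * n₂ : ℕ)
  have first_periodic : Periodic first d := (blockIndicator_periodic _ _).add_const _
  have product_periodic : Periodic (first * second) (d ^ 2 : ℕ) := by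
    refine Periodic.mul ?_ (blockIndicator_periodic _ _)
    simpa [sq] using first_periodic.nat_mul d
  calc _ = ∑ k ∈ range (d ^ 2), (first * second) (k + -τ₂) := by
        simp [first, second, blockIndicator, sub_eq_add_neg, add_assoc]
    _ = ∑ k ∈ range (d * n₂), first k := by
        rw [product_periodic.sum_range_add_const]
        exact sum_range_mul_blockIndicator (by rw [sq]; exact Nat.mul_le_mul_left d h₂) first
    _ = n₂ • ∑ k ∈ range d, blockIndicator d n₁ k := by
        rw [first_periodic.sum_range_mul, (blockIndicator_periodic _ _).sum_range_add_const]
    _ = n₁ * n₂ := by rw [sum_range_blockIndicator h₁, nsmul_eq_mul, mul_comm]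

/-- Pairwise case at scales `(d, d²)` underlying Proposition 1: the Hamming
cross-correlation over one period `d²` equals `n₁·n₂`, independently of the shifts. -/
theorem pairwise_correlation_d_dsq_shift_invariant
    (d : ℕ) (hd : 1 ≤ d) (n₁ n₂ : ℕ)
    (h₁ : n₁ ≤ d) (h₂ : n₂ ≤ d)
    (τ₁ τ₂ : ℤ) :
    ∑ k ∈ Finset.range (d ^ 2),
        (if ((k : ℤ) - τ₁) % (d : ℤ) < (n₁ : ℤ) then (1 : ℤ) else 0)
          * (if ((k : ℤ) - τ₂) % ((d : ℤ) ^ 2) < (d : ℤ) * (n₂ : ℤ) then 1 else 0)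
      = (n₁ : ℤ) * n₂ :=
  pairwise_correlation_d_dsq_shift_invariant_general d n₁ n₂ h₁ h₂ τ₁ τ₂
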